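/- Fix b > 0 and let β₀, β₁ satisfy 1/b < β₁ < β₀. For β ∈ {β₀, β₁} let F_β(p) = −b·p²/2 + β⁻¹·c(p) for p ∈ (−1,1), let p₊(β) be the unique p ∈ (0,1) with p = tanh(b·β·p), and let W(β₁) = convexHull ℝ { (p, F_{β₁}(p)) : p ∈ (−1,1) } ⊂ ℝ². Then for every p ∈ (−1,1) with |p| > p₊(β₀), the point (p, F_{β₀}(p)) belongs to W(β₁). (Geometrically: the stable part of the Curie–Weiss equilibrium Legendrian at inverse temperature β₀ is contained in the limiting basin of attraction at inverse temperature β₁ whenever β₀ > β₁.) -/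

import Mathlib

/-- The symmetrized entropy function
`c(m) = ((1+m)/2)·log((1+m)/2) + ((1−m)/2)·log((1−m)/2)` (with `c(±1) = 0`,
as `Real.log 0 = 0` in Lean). -/
noncomputable def cEnt (m : ℝ) : ℝ :=
  ((1 + m) / 2) * Real.log ((1 + m) / 2) + ((1 - m) / 2) * Real.log ((1 - m) / 2)

open Topology Filter

lemma cEnt_continuous : Continuous cEnt := by
  unfold cEnt
  exact (Real.continuous_mul_log.comp (by continuity)).add
    (Real.continuous_mul_log.comp (by continuity))

lemma cEnt_even (m : ℝ) : cEnt (-m) = cEnt m := by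
  unfold cEnt
  rw [add_comm]
  ring_nf

lemma cEnt_one : cEnt 1 = 0 := by
  norm_num [cEnt]

lemma cEnt_nonpos {m : ℝ} (h1 : -1 ≤ m) (h2 : m ≤ 1) : cEnt m ≤ 0 := by
  have t1 : ((1 + m) / 2) * Real.log ((1 + m) / 2) ≤ 0 :=
    mul_nonpos_of_nonneg_of_nonpos (by linarith) (Real.log_nonpos (by linarith) (by linarith))
  have t2 : ((1 - m) / 2) * Real.log ((1 - m) / 2) ≤ 0 :=
    mul_nonpos_of_nonneg_of_nonpos (by linarith) (Real.log_nonpos (by linarith) (by linarith))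
  unfold cEnt; linarith

lemma cEnt_hasDerivAt {x : ℝ} (h1 : -1 < x) (h2 : x < 1) :
    HasDerivAt cEnt ((Real.log (1 + x) - Real.log (1 - x)) / 2) x := by
  have hu : HasDerivAt (fun y : ℝ => (1 + y) / 2) (1 / 2) x := by
    simpa using ((hasDerivAt_id x).const_add 1).div_const 2
  have hv : HasDerivAt (fun y : ℝ => (1 - y) / 2) (-1 / 2) x := by
    simpa using ((hasDerivAt_id x).const_sub 1).div_const 2
  have hune : (1 + x) / 2 ≠ 0 := by
    have : (0:ℝ) < (1 + x) / 2 := by linarith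
    exact ne_of_gt this
  have hvpos : (0:ℝ) < (1 - x) / 2 := by linarith
  have hvne : (1 - x) / 2 ≠ 0 := ne_of_gt hvpos
  have hlu : HasDerivAt (fun y : ℝ => Real.log ((1 + y) / 2)) ((1 / 2) / ((1 + x) / 2)) x :=
    hu.log hune
  have hlv : HasDerivAt (fun y : ℝ => Real.log ((1 - y) / 2)) ((-1 / 2) / ((1 - x) / 2)) x :=
    hv.log hvne
  have h1' : HasDerivAt (fun y : ℝ => ((1 + y) / 2) * Real.log ((1 + y) / 2))
      ((1 / 2) * Real.log ((1 + x) / 2) + ((1 + x) / 2) * ((1 / 2) / ((1 + x) / 2))) x :=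
    hu.mul hlu
  have h2' : HasDerivAt (fun y : ℝ => ((1 - y) / 2) * Real.log ((1 - y) / 2))
      ((-1 / 2) * Real.log ((1 - x) / 2) + ((1 - x) / 2) * ((-1 / 2) / ((1 - x) / 2))) x :=
    hv.mul hlv
  have := h1'.add h2'
  refine this.congr_deriv ?_
  have e1 : Real.log ((1 + x) / 2) = Real.log (1 + x) - Real.log 2 :=
    Real.log_div (by linarith) two_ne_zero
  have e2 : Real.log ((1 - x) / 2) = Real.log (1 - x) - Real.log 2 :=
    Real.log_div (by linarith) two_ne_zero
  rw [e1, e2, mul_comm ((1 + x) / 2), div_mul_cancel₀ _ hune,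
    mul_comm ((1 - x) / 2), div_mul_cancel₀ _ hvne]
  ring

/-- positivity of `artanh x - a x` to the right of the positive fixed point. -/
lemma h_pos (a : ℝ) (pP : ℝ) (hpP0 : 0 < pP) (hpP1 : pP < 1)
    (heq : (Real.log (1 + pP) - Real.log (1 - pP)) / 2 - a * pP = 0)
    {x : ℝ} (hx1 : pP < x) (hx2 : x < 1) :
    0 < (Real.log (1 + x) - Real.log (1 - x)) / 2 - a * x := by
  set h : ℝ → ℝ := fun y => (Real.log (1 + y) - Real.log (1 - y)) / 2 - a * y with hh
  have hderiv : ∀ y ∈ Set.Ioo (-1 : ℝ) 1, HasDerivAt h (1 / (1 - y ^ 2) - a) y := by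
    intro y hy
    obtain ⟨hy1, hy2⟩ := hy
    have l1 : HasDerivAt (fun z : ℝ => Real.log (1 + z)) (1 / (1 + y)) y := by
      simpa using (((hasDerivAt_id y).const_add 1).log (by linarith : (1:ℝ) + y ≠ 0))
    have l2 : HasDerivAt (fun z : ℝ => Real.log (1 - z)) (-1 / (1 - y)) y := by
      simpa using (((hasDerivAt_id y).const_sub 1).log (by
        have : (0:ℝ) < 1 - y := by linarith
        exact ne_of_gt this))
    have l3 : HasDerivAt (fun z : ℝ => a * z) a y := by
      simpa using (hasDerivAt_id y).const_mul a
    have := ((l1.sub l2).div_const 2).sub l3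
    refine this.congr_deriv ?_
    have hy1' : (1:ℝ) + y ≠ 0 := by linarith
    have hy2' : (1:ℝ) - y ≠ 0 := by
      have h' : (0:ℝ) < 1 - y := by linarith
      exact ne_of_gt h'
    have hy3' : (1:ℝ) - y ^ 2 ≠ 0 := by
      have h' : (0:ℝ) < 1 - y ^ 2 := by nlinarith
      exact ne_of_gt h'
    field_simp
    ring
  have hcont : ContinuousOn h (Set.Ico 0 1) := by
    apply ContinuousOn.sub
    · apply ContinuousOn.div_const
      apply ContinuousOn.sub
      · apply ContinuousOn.log
        · fun_prop
        · intro y hy; obtain ⟨hy1, _⟩ := hy; have : (0:ℝ) < 1 + y := by linarith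
          exact ne_of_gt this
      · apply ContinuousOn.log
        · fun_prop
        · intro y hy; obtain ⟨_, hy2⟩ := hy; have : (0:ℝ) < 1 - y := by linarith
          exact ne_of_gt this
    · fun_prop
  have hmono : StrictMonoOn (deriv h) (interior (Set.Ico (0:ℝ) 1)) := by
    rw [interior_Ico]
    intro u hu v hv huv
    have hu' : u ∈ Set.Ioo (-1 : ℝ) 1 := ⟨by linarith [hu.1], hu.2⟩
    have hv' : v ∈ Set.Ioo (-1 : ℝ) 1 := ⟨by linarith [hv.1], hv.2⟩
    rw [(hderiv u hu').deriv, (hderiv v hv').deriv]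
    have h1 : (0:ℝ) < 1 - v ^ 2 := by nlinarith [hv.1, hv.2]
    have h2 : 1 - v ^ 2 < 1 - u ^ 2 := by nlinarith [hu.1, hu.2, hv.1]
    have : 1 / (1 - u ^ 2) < 1 / (1 - v ^ 2) := by
      apply one_div_lt_one_div_of_lt h1 h2
    linarith
  have hconv : StrictConvexOn ℝ (Set.Ico (0:ℝ) 1) h :=
    hmono.strictConvexOn_of_deriv (convex_Ico 0 1) hcont
  have h0 : h 0 = 0 := by simp [hh]
  have hpPz : h pP = 0 := heq
  -- strict convexity at 0 < pP < x
  have hxne : (0:ℝ) ≠ x := by linarith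
  have hb0 : 0 < pP / x := div_pos hpP0 (by linarith)
  have ha0 : 0 < 1 - pP / x := by
    have : pP / x < 1 := (div_lt_one (by linarith)).2 hx1
    linarith
  have hcomb := hconv.2 (Set.mem_Ico.2 ⟨le_refl 0, by norm_num⟩)
    (Set.mem_Ico.2 ⟨by linarith, hx2⟩) hxne ha0 hb0 (by ring)
  have hxne' : x ≠ 0 := by linarith
  have hcombval : (1 - pP / x) • (0:ℝ) + (pP / x) • x = pP := by
    rw [smul_eq_mul, smul_eq_mul]
    field_simp
    ring
  rw [hcombval, hpPz, h0, smul_eq_mul, smul_eq_mul, mul_zero, zero_add] at hcomb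
  by_contra hcon
  push_neg at hcon
  have : pP / x * h x ≤ 0 := mul_nonpos_of_nonneg_of_nonpos hb0.le hcon
  linarith

/-- The key negativity: for `x` beyond the fixed point, `cEnt x + a(1-x²)/2 < 0`. -/
lemma psi_neg (a : ℝ) (pP : ℝ) (hpP0 : 0 < pP) (hpP1 : pP < 1)
    (heq : (Real.log (1 + pP) - Real.log (1 - pP)) / 2 - a * pP = 0)
    {q : ℝ} (hq1 : pP < q) (hq2 : q < 1) :
    cEnt q + a * (1 - q ^ 2) / 2 < 0 := by
  set ψ : ℝ → ℝ := fun y => cEnt y + a * (1 - y ^ 2) / 2 with hψ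
  have hψd : ∀ y ∈ Set.Ioo (-1 : ℝ) 1,
      HasDerivAt ψ ((Real.log (1 + y) - Real.log (1 - y)) / 2 - a * y) y := by
    intro y hy
    have l1 := cEnt_hasDerivAt hy.1 hy.2
    have l2 : HasDerivAt (fun z : ℝ => a * (1 - z ^ 2) / 2) (-(a * y)) y := by
      have : HasDerivAt (fun z : ℝ => 1 - z ^ 2) (-(2 * y)) y := by
        simpa using ((hasDerivAt_pow 2 y).const_sub 1)
      have := (this.const_mul a).div_const 2
      exact this.congr_deriv (by ring)
    have := l1.add l2
    exact this.congr_deriv (by ring)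
  have hcont : ContinuousOn ψ (Set.Icc q 1) := by
    apply Continuous.continuousOn
    exact cEnt_continuous.add (by continuity)
  have hmono : StrictMonoOn ψ (Set.Icc q 1) := by
    apply strictMonoOn_of_hasDerivWithinAt_pos (convex_Icc q 1) hcont
    · intro x hx
      rw [interior_Icc] at hx
      exact ((hψd x ⟨by linarith [hx.1], hx.2⟩).hasDerivWithinAt)
    · intro x hx
      rw [interior_Icc] at hx
      exact h_pos a pP hpP0 hpP1 heq (lt_trans hq1 hx.1) hx.2
  have := hmono (Set.mem_Icc.2 ⟨le_refl q, le_of_lt hq2⟩)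
    (Set.mem_Icc.2 ⟨le_of_lt hq2, le_refl 1⟩) hq2
  have hψ1 : ψ 1 = 0 := by simp [hψ, cEnt_one]
  rw [hψ1] at this
  exact this

/-- For `1/b < β₁ < β₀`, every point `(p, F_{β₀}(p))` of the
stable part (`|p| > p₊(β₀)`) of the Curie–Weiss equilibrium Legendrian at
inverse temperature `β₀` lies in the convex hull `W(β₁)` of the graph of
`F_{β₁}` over `(−1,1)`. -/
theorem stable_branch_subset_basin
    (b β₀ β₁ : ℝ) (hb : 0 < b) (hβ₁ : 1 / b < β₁) (hββ : β₁ < β₀)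
    (pPlus : ℝ) (hpPlus : pPlus ∈ Set.Ioo (0 : ℝ) 1)
    (hpPluseq : pPlus = Real.tanh (b * β₀ * pPlus))
    (p : ℝ) (hp : p ∈ Set.Ioo (-1 : ℝ) 1) (hpstable : pPlus < |p|) :
    (p, -b * p ^ 2 / 2 + β₀⁻¹ * cEnt p) ∈
      convexHull ℝ {pz : ℝ × ℝ | ∃ x ∈ Set.Ioo (-1 : ℝ) 1,
        pz = (x, -b * x ^ 2 / 2 + β₁⁻¹ * cEnt x)} := by
  obtain ⟨hpP0, hpP1⟩ := hpPlus
  obtain ⟨hpm1, hp1⟩ := hp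
  have hβ₁pos : 0 < β₁ := lt_trans (by positivity) hβ₁
  have hβ₀pos : 0 < β₀ := lt_trans hβ₁pos hββ
  set S := {pz : ℝ × ℝ | ∃ x ∈ Set.Ioo (-1 : ℝ) 1,
      pz = (x, -b * x ^ 2 / 2 + β₁⁻¹ * cEnt x)} with hS
  set y := -b * p ^ 2 / 2 + β₀⁻¹ * cEnt p with hy
  set G : ℝ → ℝ := fun x => -b * x ^ 2 / 2 + β₁⁻¹ * cEnt x with hGdef
  set a₀ := b * β₀ with ha₀
  -- fixed point equation in log form
  have heq : (Real.log (1 + pPlus) - Real.log (1 - pPlus)) / 2 - a₀ * pPlus = 0 := by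
    set t := a₀ * pPlus with ht
    have hc := Real.cosh_pos t
    have h1 : 1 + pPlus = Real.exp t / Real.cosh t := by
      rw [hpPluseq, Real.tanh_eq_sinh_div_cosh]
      field_simp
      exact Real.cosh_add_sinh t
    have h2 : 1 - pPlus = Real.exp (-t) / Real.cosh t := by
      rw [hpPluseq, Real.tanh_eq_sinh_div_cosh]
      field_simp
      exact Real.cosh_sub_sinh t
    rw [h1, h2, Real.log_div (Real.exp_ne_zero t) (ne_of_gt hc),
      Real.log_div (Real.exp_ne_zero (-t)) (ne_of_gt hc), Real.log_exp, Real.log_exp]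
    ring
  have hq1 : |p| < 1 := abs_lt.2 ⟨hpm1, hp1⟩
  have hψneg : cEnt |p| + a₀ * (1 - |p| ^ 2) / 2 < 0 :=
    psi_neg a₀ pPlus hpP0 hpP1 heq hpstable hq1
  have hce : cEnt p = cEnt |p| := by
    rcases abs_cases p with ⟨h, _⟩ | ⟨h, _⟩
    · rw [h]
    · rw [h, cEnt_even]
  have hsq : p ^ 2 = |p| ^ 2 := (sq_abs p).symm
  have hyb : y < -b / 2 := by
    have hrw : y = -b / 2 + β₀⁻¹ * (cEnt |p| + a₀ * (1 - |p| ^ 2) / 2) := by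
      rw [hy, hce, hsq, ha₀]
      field_simp
      ring
    rw [hrw]
    have := mul_neg_of_pos_of_neg (inv_pos.2 hβ₀pos) hψneg
    linarith
  have hGple : G p ≤ y := by
    have hc := cEnt_nonpos (le_of_lt hpm1) (le_of_lt hp1)
    have hinv : β₀⁻¹ ≤ β₁⁻¹ := by
      apply inv_anti₀ hβ₁pos (le_of_lt hββ)
    have := mul_le_mul_of_nonpos_right hinv hc
    simp only [hGdef, hy]
    linarith
  have hGcont : Continuous G := by
    exact ((continuous_const.mul (continuous_pow 2)).div_const 2).add
      (continuous_const.mul cEnt_continuous)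
  have hG1 : G 1 = -b / 2 := by simp [hGdef, cEnt_one]
  have hyG1 : y < G 1 := by rw [hG1]; exact hyb
  have hO : {x : ℝ | y < G x} ∈ 𝓝 (1 : ℝ) :=
    (isOpen_lt continuous_const hGcont).mem_nhds hyG1
  have hIoi : Set.Ioi |p| ∈ 𝓝 (1 : ℝ) := Ioi_mem_nhds hq1
  have hmem : {x : ℝ | y < G x} ∩ Set.Ioi |p| ∩ Set.Iio 1 ∈ 𝓝[<] (1 : ℝ) :=
    Filter.inter_mem (nhdsWithin_le_nhds (Filter.inter_mem hO hIoi)) self_mem_nhdsWithin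
  obtain ⟨p', ⟨⟨hyp', hqp'⟩, hp'1⟩⟩ := Filter.nonempty_of_mem hmem
  rw [Set.mem_Ioi] at hqp'
  rw [Set.mem_Iio] at hp'1
  rw [Set.mem_setOf_eq] at hyp'
  have hp'0 : 0 < p' := lt_of_le_of_lt (abs_nonneg p) hqp'
  have hmemS : ∀ x, -1 < x → x < 1 → (x, G x) ∈ S :=
    fun x h1 h2 => ⟨x, ⟨h1, h2⟩, by simp [hGdef]⟩
  have hP1 : ((p' : ℝ), G p') ∈ S := hmemS p' (by linarith) hp'1
  have hGe : G (-p') = G p' := by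
    simp only [hGdef, cEnt_even]
    ring_nf
  have hP2 : ((-p' : ℝ), G p') ∈ S := by
    rw [← hGe]
    exact hmemS (-p') (by linarith) (by linarith)
  have hP3 : (p, G p) ∈ S := hmemS p hpm1 hp1
  have habs1 : -p' < p := by
    have := neg_abs_le p
    linarith
  have habs2 : p < p' := lt_of_le_of_lt (le_abs_self p) hqp'
  set t := (p' + p) / (2 * p') with htdef
  have ht0 : 0 ≤ t := by
    apply div_nonneg <;> linarith
  have ht1 : t ≤ 1 := by
    rw [div_le_one (by linarith)]
    linarith
  have hp'ne : p' ≠ 0 := ne_of_gt hp'0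
  have hX : ((p, G p') : ℝ × ℝ) ∈ convexHull ℝ S := by
    apply segment_subset_convexHull hP1 hP2
    refine ⟨t, 1 - t, ht0, by linarith, by ring, ?_⟩
    simp only [Prod.smul_mk, smul_eq_mul, Prod.mk_add_mk, Prod.mk.injEq]
    constructor
    · have h2t : t * (2 * p') = p' + p := by
        rw [htdef]
        exact div_mul_cancel₀ _ (by positivity)
      linear_combination h2t
    · ring
  have hd : 0 < G p' - G p := by linarith
  set s := (y - G p) / (G p' - G p) with hsdef
  have hs0 : 0 ≤ s := div_nonneg (by linarith) (by linarith)
  have hs1 : s ≤ 1 := by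
    rw [div_le_one hd]
    linarith
  have hfin : ((p, y) : ℝ × ℝ) ∈ convexHull ℝ S := by
    apply (convex_convexHull ℝ S).segment_subset hX (subset_convexHull ℝ S hP3)
    refine ⟨s, 1 - s, hs0, by linarith, by ring, ?_⟩
    simp only [Prod.smul_mk, smul_eq_mul, Prod.mk_add_mk, Prod.mk.injEq]
    constructor
    · ring
    · have : s * (G p' - G p) = y - G p := div_mul_cancel₀ _ (ne_of_gt hd)
      linarith [this]
  exact hfin
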